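/- Deterministic peeling bound. Let d, T ≥ 1, λ > 0, L > 0, let X_1, …, X_T ∈ ℝ^d satisfy ‖X_t‖ ≤ L, and set V_0 = λ·I_d, V_t = V_{t−1} + X_t X_tᵀ. Let Δ_1, …, Δ_T ∈ [0,1] and let β_0 ≤ β_1 ≤ … ≤ β_{T−1} be real numbers with β_0 ≥ 1; write β := β_{T−1}. Then for every Γ ∈ (0,1): Σ_{t=1}^T Δ_t·1{ ‖X_t‖²_{V_{t−1}^{−1}} ≥ Δ_t²/β_{t−1} } ≤ T·Γ + (48·d·β/Γ)·log(1 + 8·L²·β/(λ·Γ²)). -/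

import Mathlib

open Matrix Finset
open scoped Classical

/-- Euclidean norm of a vector in `ℝ^d`. -/
noncomputable def enorm2 {d : ℕ} (v : Fin d → ℝ) : ℝ := Real.sqrt (v ⬝ᵥ v)

/-!
Rounds with `Δ_t ≤ Γ` contribute at most `T Γ`. The others are peeled into dyadic levels: if
`2⁻ˡ < Δ ≤ 2¹⁻ˡ` then `Δ ≤ 2 · 2⁻ˡ`, so their sum is at most `2 ∑ₗ 2⁻ˡ Nₗ`, where `Nₗ` counts the
rounds with `2⁻ˡ < Δ_t` and only levels with `2ˡ ≤ 2 / Γ` occur. At such rounds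
`‖X_t‖²_{V_{t-1}⁻¹} ≥ b := 4⁻ˡ / β`, and the elliptical potential count bounds `Nₗ`: the regularized
Gram matrix `W_t` of the counted rounds before `t` is dominated by `V_{t-1}`, so its inverse
quadratic form at `X_t` is at least `b`; the matrix determinant lemma then gives
`det W ≥ λᵈ (1 + b)^N`, while AM-GM on the eigenvalues gives `det W ≤ (λ + N L² / d)ᵈ`. Taking
logarithms, `x = N b / (2d)` satisfies `x ≤ log (1 + c x)` with `c = 2 L² / (λ b)`, hence
`x ≤ 3 log (1 + c)`, i.e. `Nₗ ≤ 6 d β 4ˡ log (1 + 8 L² β / (λ Γ²))`. The geometric series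
`∑ 2ˡ ≤ 4 / Γ` finishes the bound.
-/

namespace Real

lemma prod_le_sum_div_card_pow {ι : Type*} (s : Finset ι) {f : ι → ℝ} (hf : ∀ i ∈ s, 0 ≤ f i) :
    ∏ i ∈ s, f i ≤ ((∑ i ∈ s, f i) / #s) ^ #s := by
  rcases s.eq_empty_or_nonempty with rfl | hs
  · simp
  have hcard : (0 : ℝ) < #s := by exact_mod_cast hs.card_pos
  have amgm := geom_mean_le_arith_mean_weighted s (fun _ ↦ (#s : ℝ)⁻¹) f
    (fun _ _ ↦ by positivity) (by simp [hcard.ne']) hf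
  rw [← mul_sum, inv_mul_eq_div] at amgm
  calc ∏ i ∈ s, f i = (∏ i ∈ s, f i ^ (#s : ℝ)⁻¹) ^ #s := by
        rw [← prod_pow]
        refine prod_congr rfl fun i hi ↦ ?_
        rw [← rpow_natCast, ← rpow_mul (hf i hi), inv_mul_cancel₀ hcard.ne', rpow_one]
    _ ≤ _ := pow_le_pow_left₀ (prod_nonneg fun i hi ↦ rpow_nonneg (hf i hi) _) amgm _

lemma div_two_le_log_one_add {b : ℝ} (hb0 : 0 ≤ b) (hb1 : b ≤ 1) : b / 2 ≤ log (1 + b) := by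
  calc b / 2 ≤ 1 - (1 + b)⁻¹ := by
        rw [le_sub_iff_add_le, ← le_sub_iff_add_le', inv_le_iff_one_le_mul₀ (by positivity)]
        nlinarith
    _ ≤ log (1 + b) := one_sub_inv_le_log_of_pos (by positivity)

lemma log_one_add_le_of_three_le {x : ℝ} (hx : 3 ≤ x) : log (1 + x) ≤ 2 * x / 3 := by
  have hsqrt : √(1 + x) ≤ 1 + x / 3 := sqrt_le_iff.mpr ⟨by positivity, by nlinarith⟩
  have := log_le_sub_one_of_pos (sqrt_pos.mpr (by positivity : (0 : ℝ) < 1 + x))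
  rw [log_sqrt (by positivity)] at this
  linarith

lemma le_three_mul_log_of_le_log_one_add_mul {x c : ℝ} (hx : 0 ≤ x) (hc : 2 ≤ c)
    (h : x ≤ log (1 + c * x)) : x ≤ 3 * log (1 + c) := by
  have hlog : 1 ≤ log (1 + c) := by
    rw [le_log_iff_exp_le (by positivity)]
    linarith [exp_one_lt_d9]
  by_contra! hlt
  have hsplit : log (1 + c * x) ≤ log (1 + c) + log (1 + x) := by
    rw [← log_mul (by positivity) (by positivity)]
    exact log_le_log (by positivity) (by nlinarith)
  linarith [log_one_add_le_of_three_le (by linarith : 3 ≤ x)]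

end Real

namespace Matrix

variable {n : Type*} [Fintype n] [DecidableEq n]

lemma PosDef.two_mul_dotProduct_sub_le {U : Matrix n n ℝ} (hU : U.PosDef) (x y : n → ℝ) :
    2 * (x ⬝ᵥ y) - y ⬝ᵥ U *ᵥ y ≤ x ⬝ᵥ U⁻¹ *ᵥ x := by
  set z := U⁻¹ *ᵥ x
  have hUz : U *ᵥ z = x := by
    rw [mulVec_mulVec, mul_nonsing_inv _ hU.det_pos.ne'.isUnit, one_mulVec]
  have hsymm : z ⬝ᵥ U *ᵥ y = y ⬝ᵥ x := by
    rw [dotProduct_mulVec, ← mulVec_transpose, ← conjTranspose_eq_transpose_of_trivial,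
      hU.isHermitian.eq, hUz, dotProduct_comm]
  have hsq := (hU.posSemidef.dotProduct_mulVec_nonneg (y - z))
  simp only [star_trivial, mulVec_sub, sub_dotProduct, dotProduct_sub, hUz, hsymm] at hsq
  rw [dotProduct_comm z x] at hsq
  linarith [dotProduct_comm x y]

lemma PosDef.dotProduct_inv_mulVec_le {U V : Matrix n n ℝ} (hU : U.PosDef)
    (hUV : (V - U).PosSemidef) (x : n → ℝ) :
    x ⬝ᵥ V⁻¹ *ᵥ x ≤ x ⬝ᵥ U⁻¹ *ᵥ x := by
  have hV : V.PosDef := by simpa using hU.add_posSemidef hUV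
  set y := V⁻¹ *ᵥ x
  have hVy : V *ᵥ y = x := by
    rw [mulVec_mulVec, mul_nonsing_inv _ hV.det_pos.ne'.isUnit, one_mulVec]
  have hle : y ⬝ᵥ U *ᵥ y ≤ y ⬝ᵥ V *ᵥ y := by
    have := hUV.dotProduct_mulVec_nonneg y
    simp only [star_trivial, sub_mulVec, dotProduct_sub] at this
    linarith
  have := hU.two_mul_dotProduct_sub_le x y
  rw [hVy, dotProduct_comm y x] at hle
  linarith

lemma det_add_vecMulVec_self {A : Matrix n n ℝ} (hA : IsUnit A.det) (v : n → ℝ) :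
    (A + vecMulVec v v).det = A.det * (1 + v ⬝ᵥ A⁻¹ *ᵥ v) := by
  rw [vecMulVec_eq Unit, det_add_replicateCol_mul_replicateRow hA, Matrix.mul_assoc]
  congr 1
  simp [det_unique, mul_apply, mulVec, dotProduct]

lemma PosSemidef.det_le_trace_div_pow {A : Matrix n n ℝ} (hA : A.PosSemidef) :
    A.det ≤ (A.trace / Fintype.card n) ^ Fintype.card n := by
  rw [hA.isHermitian.det_eq_prod_eigenvalues, hA.isHermitian.trace_eq_sum_eigenvalues]
  simpa using Real.prod_le_sum_div_card_pow univ fun i _ ↦ hA.eigenvalues_nonneg i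

end Matrix

section RegularizedGram

variable {n ι : Type*} [DecidableEq n]

noncomputable def regularizedGram (lam : ℝ) (X : ι → n → ℝ) (S : Finset ι) : Matrix n n ℝ :=
  lam • 1 + ∑ s ∈ S, vecMulVec (X s) (X s)

variable {lam : ℝ} {X : ι → n → ℝ}

lemma regularizedGram_insert [DecidableEq ι] {S : Finset ι} {a : ι} (ha : a ∉ S) :
    regularizedGram lam X (insert a S) = regularizedGram lam X S + vecMulVec (X a) (X a) := by
  rw [regularizedGram, regularizedGram, sum_insert ha]
  abel

lemma eq_regularizedGram_Icc {X : ℕ → n → ℝ} {V : ℕ → Matrix n n ℝ} (hV0 : V 0 = lam • 1)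
    (hV : ∀ t, V (t + 1) = V t + vecMulVec (X (t + 1)) (X (t + 1))) (t : ℕ) :
    V t = regularizedGram lam X (Icc 1 t) := by
  induction t with
  | zero => simp [hV0, regularizedGram]
  | succ t ih =>
    rw [hV, ih, regularizedGram, regularizedGram, sum_Icc_succ_top (Nat.le_add_left 1 t),
      add_assoc]

variable [Fintype n]

lemma posSemidef_regularizedGram_sub {S S' : Finset ι} (h : S ⊆ S') :
    (regularizedGram lam X S' - regularizedGram lam X S).PosSemidef := by
  rw [regularizedGram, regularizedGram, add_sub_add_left_eq_sub, ← sum_sdiff h,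
    add_sub_cancel_right]
  exact posSemidef_sum _ fun s _ ↦ by simpa using posSemidef_vecMulVec_self_star (X s)

lemma posDef_regularizedGram (hlam : 0 < lam) (S : Finset ι) :
    (regularizedGram lam X S).PosDef := by
  have h0 : (regularizedGram lam X ∅).PosDef := by
    simpa [regularizedGram] using PosDef.one.smul hlam
  simpa using h0.add_posSemidef
    (posSemidef_regularizedGram_sub (lam := lam) (X := X) (empty_subset S))

lemma trace_regularizedGram (S : Finset ι) :
    (regularizedGram lam X S).trace = Fintype.card n * lam + ∑ s ∈ S, X s ⬝ᵥ X s := by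
  simp [regularizedGram, trace_sum, trace_vecMulVec, mul_comm]

lemma dotProduct_inv_regularizedGram_le (hlam : 0 < lam) (S : Finset ι) (x : n → ℝ) :
    x ⬝ᵥ (regularizedGram lam X S)⁻¹ *ᵥ x ≤ x ⬝ᵥ x / lam := by
  have h := (posDef_regularizedGram (X := X) hlam ∅).dotProduct_inv_mulVec_le
    (posSemidef_regularizedGram_sub (empty_subset S)) x
  have hinv : (lam • (1 : Matrix n n ℝ))⁻¹ = lam⁻¹ • 1 :=
    inv_eq_left_inv (by simp [smul_smul, hlam.ne'])
  simpa [regularizedGram, hinv, div_eq_inv_mul, smul_mulVec] using h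

lemma det_mul_pow_card_le_det_regularizedGram [LinearOrder ι] (hlam : 0 < lam) {b : ℝ}
    (hb : 0 ≤ b) (S : Finset ι)
    (hS : ∀ t ∈ S, b ≤ X t ⬝ᵥ (regularizedGram lam X {s ∈ S | s < t})⁻¹ *ᵥ X t) :
    lam ^ Fintype.card n * (1 + b) ^ #S ≤ (regularizedGram lam X S).det := by
  induction S using Finset.induction_on_max with
  | empty => simp [regularizedGram]
  | insert a S hlt ih =>
    have ha : a ∉ S := fun h ↦ (hlt a h).false
    have hprev : ∀ t ∈ S, {s ∈ insert a S | s < t} = {s ∈ S | s < t} := fun t ht ↦ by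
      rw [filter_insert, if_neg (not_lt.mpr (hlt t ht).le)]
    have hlast : {s ∈ insert a S | s < a} = S := by
      rw [filter_insert, if_neg (lt_irrefl a), filter_true_of_mem hlt]
    have hquad := hS a (mem_insert_self a S)
    rw [hlast] at hquad
    rw [regularizedGram_insert ha,
      det_add_vecMulVec_self (posDef_regularizedGram hlam S).det_pos.ne'.isUnit,
      card_insert_of_notMem ha, pow_succ, ← mul_assoc]
    gcongr
    · exact (posDef_regularizedGram hlam S).det_pos.le
    · exact ih fun t ht ↦ hprev t ht ▸ hS t (mem_insert_of_mem ht)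

lemma det_regularizedGram_le [Nonempty n] (hlam : 0 < lam) {L : ℝ} {S : Finset ι}
    (hX : ∀ s ∈ S, X s ⬝ᵥ X s ≤ L ^ 2) :
    (regularizedGram lam X S).det ≤ (lam + #S * L ^ 2 / Fintype.card n) ^ Fintype.card n := by
  have hd : (0 : ℝ) < Fintype.card n := by exact_mod_cast Fintype.card_pos
  have hpsd := (posDef_regularizedGram (X := X) hlam S).posSemidef
  refine hpsd.det_le_trace_div_pow.trans ?_
  gcongr
  · exact div_nonneg hpsd.trace_nonneg hd.le
  · rw [trace_regularizedGram, add_div, mul_div_cancel_left₀ _ hd.ne']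
    gcongr
    simpa using sum_le_card_nsmul S _ _ hX

lemma card_mul_log_one_add_le [LinearOrder ι] [Nonempty n] (hlam : 0 < lam) {L b : ℝ}
    (hb : 0 ≤ b) {S : Finset ι} (hX : ∀ t ∈ S, X t ⬝ᵥ X t ≤ L ^ 2)
    (hS : ∀ t ∈ S, b ≤ X t ⬝ᵥ (regularizedGram lam X {s ∈ S | s < t})⁻¹ *ᵥ X t) :
    #S * Real.log (1 + b) ≤
      Fintype.card n * Real.log (1 + #S * L ^ 2 / (Fintype.card n * lam)) := by
  have hd : (0 : ℝ) < Fintype.card n := Nat.cast_pos.mpr Fintype.card_pos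
  have hdet := (det_mul_pow_card_le_det_regularizedGram hlam hb S hS).trans
    (det_regularizedGram_le hlam hX)
  rw [show lam + #S * L ^ 2 / Fintype.card n = lam * (1 + #S * L ^ 2 / (Fintype.card n * lam))
    by field_simp, mul_pow, mul_le_mul_iff_right₀ (by positivity)] at hdet
  simpa [Real.log_pow] using Real.log_le_log (by positivity) hdet

theorem card_le_of_le_dotProduct_inv_regularizedGram [LinearOrder ι] (hlam : 0 < lam)
    {L b : ℝ} (hb0 : 0 < b) (hb1 : b ≤ 1) {S : Finset ι} (hX : ∀ t ∈ S, X t ⬝ᵥ X t ≤ L ^ 2)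
    (hS : ∀ t ∈ S, b ≤ X t ⬝ᵥ (regularizedGram lam X {s ∈ S | s < t})⁻¹ *ᵥ X t) :
    (#S : ℝ) ≤ 6 * Fintype.card n / b * Real.log (1 + 2 * L ^ 2 / (lam * b)) := by
  rcases S.eq_empty_or_nonempty with rfl | ⟨t, ht⟩
  · simpa using mul_nonneg (by positivity) (Real.log_nonneg (by simp; positivity))
  have hbL : lam * b ≤ L ^ 2 := by
    have := (hS t ht).trans (dotProduct_inv_regularizedGram_le hlam _ _)
    rw [le_div_iff₀ hlam] at this
    linarith [hX t ht]
  have : Nonempty n := by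
    by_contra! hn
    simpa [dotProduct] using (hb0.trans_le (hS t ht))
  have hlog := card_mul_log_one_add_le hlam hb0.le hX hS
  set d : ℝ := (Fintype.card n : ℝ)
  have hd : 0 < d := Nat.cast_pos.mpr Fintype.card_pos
  have hx : #S * b / (2 * d) ≤ Real.log (1 + 2 * L ^ 2 / (lam * b) * (#S * b / (2 * d))) := by
    calc #S * b / (2 * d) = #S * (b / 2) / d := by ring
      _ ≤ #S * Real.log (1 + b) / d := by gcongr; exact Real.div_two_le_log_one_add hb0.le hb1
      _ ≤ d * Real.log (1 + #S * L ^ 2 / (d * lam)) / d := by gcongr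
      _ = _ := by rw [mul_div_cancel_left₀ _ hd.ne']; congr 2; field_simp
  have hx3 := Real.le_three_mul_log_of_le_log_one_add_mul (by positivity)
    (by rw [le_div_iff₀ (by positivity)]; linarith) hx
  calc (#S : ℝ) = 2 * d / b * (#S * b / (2 * d)) := by field_simp
    _ ≤ 2 * d / b * (3 * Real.log (1 + 2 * L ^ 2 / (lam * b))) := by gcongr
    _ = _ := by ring

end RegularizedGram

lemma le_two_mul_sum_dyadic {x : ℝ} {N : ℕ} (hx0 : ((2 : ℝ) ^ N)⁻¹ < x) (hx1 : x ≤ 1) :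
    x ≤ 2 * ∑ l ∈ Icc 1 N, if ((2 : ℝ) ^ l)⁻¹ < x then ((2 : ℝ) ^ l)⁻¹ else 0 := by
  have hx : 0 < x := lt_trans (by positivity) hx0
  obtain ⟨k, hk, hk'⟩ := exists_nat_pow_near (one_le_inv₀ hx |>.mpr hx1) one_lt_two
  have hkN : k + 1 ≤ N := by
    have : (2 : ℝ) ^ k < 2 ^ N := hk.trans_lt ((inv_lt_comm₀ (by positivity) hx).mp hx0)
    exact (pow_lt_pow_iff_right₀ one_lt_two).mp this
  have hterm : ((2 : ℝ) ^ (k + 1))⁻¹ < x := (inv_lt_comm₀ hx (by positivity)).mp hk'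
  calc x ≤ ((2 : ℝ) ^ k)⁻¹ := (le_inv_comm₀ (by positivity) hx).mp hk
    _ = 2 * ((2 : ℝ) ^ (k + 1))⁻¹ := by rw [pow_succ, mul_inv]; ring
    _ ≤ 2 * ∑ l ∈ Icc 1 N, if ((2 : ℝ) ^ l)⁻¹ < x then ((2 : ℝ) ^ l)⁻¹ else 0 := by
        gcongr
        simpa only [if_pos hterm] using
          single_le_sum (f := fun l ↦ if ((2 : ℝ) ^ l)⁻¹ < x then ((2 : ℝ) ^ l)⁻¹ else 0)
            (fun l _ ↦ by positivity) (mem_Icc.mpr ⟨le_add_self, hkN⟩)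

lemma sum_le_of_card_lt_le {ι : Type*} (s : Finset ι) (f : ι → ℝ) {Γ K : ℝ} (hΓ0 : 0 < Γ)
    (hΓ1 : Γ ≤ 1) (hK : 0 ≤ K) (hf : ∀ i ∈ s, Γ < f i ∧ f i ≤ 1)
    (hcount : ∀ θ : ℝ, Γ / 2 ≤ θ → θ ≤ 1 → (#{i ∈ s | θ < f i} : ℝ) ≤ K / θ ^ 2) :
    ∑ i ∈ s, f i ≤ 8 * K / Γ := by
  obtain ⟨n, hn, hn'⟩ := exists_nat_pow_near (one_le_inv₀ hΓ0 |>.mpr hΓ1) one_lt_two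
  have hΓN : ((2 : ℝ) ^ (n + 1))⁻¹ < Γ := (inv_lt_comm₀ hΓ0 (by positivity)).mp hn'
  have hlevel : ∀ l ∈ Icc 1 (n + 1), Γ / 2 ≤ ((2 : ℝ) ^ l)⁻¹ := fun l hl ↦
    calc Γ / 2 ≤ ((2 : ℝ) ^ n)⁻¹ / 2 := by
          gcongr; exact (le_inv_comm₀ (by positivity) hΓ0).mp hn
      _ = ((2 : ℝ) ^ (n + 1))⁻¹ := by rw [pow_succ, mul_inv]; ring
      _ ≤ ((2 : ℝ) ^ l)⁻¹ := by gcongr; exacts [one_le_two, (mem_Icc.mp hl).2]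
  have hgeom : ∑ l ∈ Icc 1 (n + 1), (2 : ℝ) ^ l ≤ 4 / Γ :=
    calc ∑ l ∈ Icc 1 (n + 1), (2 : ℝ) ^ l ≤ ∑ l ∈ range (n + 2), (2 : ℝ) ^ l :=
          sum_le_sum_of_subset_of_nonneg (fun l hl ↦ by simp at hl ⊢; omega)
            (fun _ _ _ ↦ by positivity)
      _ ≤ 4 * 2 ^ n := by rw [geom_sum_eq (by norm_num)]; ring_nf; linarith
      _ ≤ 4 * Γ⁻¹ := by gcongr
      _ = 4 / Γ := (div_eq_mul_inv _ _).symm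
  calc ∑ i ∈ s, f i
      ≤ ∑ i ∈ s, 2 * ∑ l ∈ Icc 1 (n + 1), if ((2 : ℝ) ^ l)⁻¹ < f i then ((2 : ℝ) ^ l)⁻¹ else 0 :=
        sum_le_sum fun i hi ↦ le_two_mul_sum_dyadic (hΓN.trans (hf i hi).1) (hf i hi).2
    _ = 2 * ∑ l ∈ Icc 1 (n + 1), ((2 : ℝ) ^ l)⁻¹ * #{i ∈ s | ((2 : ℝ) ^ l)⁻¹ < f i} := by
        rw [← mul_sum, sum_comm]
        simp only [← sum_filter, sum_const, nsmul_eq_mul, mul_comm]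
    _ ≤ 2 * ∑ l ∈ Icc 1 (n + 1), ((2 : ℝ) ^ l)⁻¹ * (K / (((2 : ℝ) ^ l)⁻¹) ^ 2) := by
        gcongr with l hl
        exact hcount _ (hlevel l hl) (inv_le_one_of_one_le₀ (one_le_pow₀ one_le_two))
    _ = 2 * K * ∑ l ∈ Icc 1 (n + 1), (2 : ℝ) ^ l := by
        rw [mul_sum, mul_sum]; refine sum_congr rfl fun l _ ↦ ?_; field_simp
    _ ≤ 2 * K * (4 / Γ) := by gcongr
    _ = 8 * K / Γ := by ring

lemma sum_le_card_mul_add_of_card_lt_le {ι : Type*} (s : Finset ι) (f : ι → ℝ) {Γ K : ℝ}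
    (hΓ0 : 0 < Γ) (hΓ1 : Γ ≤ 1) (hK : 0 ≤ K) (hf : ∀ i ∈ s, f i ≤ 1)
    (hcount : ∀ θ : ℝ, Γ / 2 ≤ θ → θ ≤ 1 → (#{i ∈ s | θ < f i} : ℝ) ≤ K / θ ^ 2) :
    ∑ i ∈ s, f i ≤ #s * Γ + 8 * K / Γ := by
  rw [← sum_filter_add_sum_filter_not s (fun i ↦ f i ≤ Γ)]
  gcongr ?_ + ?_
  · calc ∑ i ∈ s with f i ≤ Γ, f i ≤ #{i ∈ s | f i ≤ Γ} • Γ :=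
          sum_le_card_nsmul _ _ _ fun i hi ↦ (mem_filter.mp hi).2
      _ ≤ #s * Γ := by rw [nsmul_eq_mul]; gcongr; exact filter_subset _ _
  · refine sum_le_of_card_lt_le _ _ hΓ0 hΓ1 hK (fun i hi ↦ ?_) fun θ hθΓ hθ1 ↦ ?_
    · obtain ⟨his, hiΓ⟩ := mem_filter.mp hi
      exact ⟨not_le.mp hiΓ, hf i his⟩
    · refine le_trans ?_ (hcount θ hθΓ hθ1)
      gcongr
      exact filter_subset _ _

section Sequential

variable {n : Type*} [Fintype n] [DecidableEq n] {lam : ℝ} {X : ℕ → n → ℝ}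

theorem card_le_of_le_dotProduct_inv_regularizedGram_Icc (hlam : 0 < lam) {L b : ℝ}
    (hb0 : 0 < b) (hb1 : b ≤ 1) {S : Finset ℕ} (hS1 : ∀ t ∈ S, 1 ≤ t)
    (hX : ∀ t ∈ S, X t ⬝ᵥ X t ≤ L ^ 2)
    (hS : ∀ t ∈ S, b ≤ X t ⬝ᵥ (regularizedGram lam X (Icc 1 (t - 1)))⁻¹ *ᵥ X t) :
    (#S : ℝ) ≤ 6 * Fintype.card n / b * Real.log (1 + 2 * L ^ 2 / (lam * b)) := by
  refine card_le_of_le_dotProduct_inv_regularizedGram hlam hb0 hb1 hX fun t ht ↦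
    (hS t ht).trans ((posDef_regularizedGram hlam _).dotProduct_inv_mulVec_le
      (posSemidef_regularizedGram_sub fun s hs ↦ ?_) _)
  obtain ⟨hsS, hst⟩ := mem_filter.mp hs
  exact mem_Icc.mpr ⟨hS1 s hsS, by omega⟩

lemma card_le_of_sq_div_le_dotProduct_inv_regularizedGram_Icc (hlam : 0 < lam)
    {L B Γ θ : ℝ} (hB : 1 ≤ B) (hΓ : 0 < Γ) (hθΓ : Γ / 2 ≤ θ) (hθ1 : θ ≤ 1) {S : Finset ℕ}
    (hS1 : ∀ t ∈ S, 1 ≤ t) (hX : ∀ t ∈ S, X t ⬝ᵥ X t ≤ L ^ 2)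
    (hS : ∀ t ∈ S, θ ^ 2 / B ≤ X t ⬝ᵥ (regularizedGram lam X (Icc 1 (t - 1)))⁻¹ *ᵥ X t) :
    (#S : ℝ) ≤ 6 * Fintype.card n * B * Real.log (1 + 8 * L ^ 2 * B / (lam * Γ ^ 2)) / θ ^ 2 := by
  have hθ : 0 < θ := by linarith
  have hlog : Real.log (1 + 2 * L ^ 2 / (lam * (θ ^ 2 / B))) ≤
      Real.log (1 + 8 * L ^ 2 * B / (lam * Γ ^ 2)) := by
    refine Real.log_le_log (by positivity) ?_
    calc 1 + 2 * L ^ 2 / (lam * (θ ^ 2 / B)) = 1 + 2 * L ^ 2 * B / (lam * θ ^ 2) := by field_simp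
      _ ≤ 1 + 2 * L ^ 2 * B / (lam * (Γ / 2) ^ 2) := by gcongr
      _ = 1 + 8 * L ^ 2 * B / (lam * Γ ^ 2) := by ring
  calc (#S : ℝ) ≤ 6 * Fintype.card n / (θ ^ 2 / B) *
        Real.log (1 + 2 * L ^ 2 / (lam * (θ ^ 2 / B))) :=
        card_le_of_le_dotProduct_inv_regularizedGram_Icc hlam (by positivity)
          (div_le_one_of_le₀ (by nlinarith) (by linarith)) hS1 hX hS
    _ ≤ 6 * Fintype.card n / (θ ^ 2 / B) * Real.log (1 + 8 * L ^ 2 * B / (lam * Γ ^ 2)) := by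
        gcongr
    _ = _ := by field_simp

end Sequential

theorem peeling_bound_general (d T : ℕ) (lam L : ℝ)
    (hlam : 0 < lam)
    (X : ℕ → Fin d → ℝ) (hX : ∀ t ∈ Finset.Icc 1 T, enorm2 (X t) ≤ L)
    (V : ℕ → Matrix (Fin d) (Fin d) ℝ)
    (hV0 : V 0 = lam • (1 : Matrix (Fin d) (Fin d) ℝ))
    (hV : ∀ t, V (t + 1) = V t + Matrix.vecMulVec (X (t + 1)) (X (t + 1)))
    (Δ : ℕ → ℝ) (hΔ : ∀ t ∈ Finset.Icc 1 T, Δ t ∈ Set.Icc (0 : ℝ) 1)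
    (β : ℕ → ℝ) (hβ0 : 1 ≤ β 0)
    (hβmono : ∀ s t : ℕ, s ≤ t → t ≤ T - 1 → β s ≤ β t)
    (Γ : ℝ) (hΓ0 : 0 < Γ) (hΓ1 : Γ < 1) :
    ∑ t ∈ Finset.Icc 1 T,
        Δ t * (if Δ t ^ 2 / β (t - 1) ≤ X t ⬝ᵥ (V (t - 1))⁻¹.mulVec (X t) then (1 : ℝ) else 0)
      ≤ T * Γ + (48 * d * β (T - 1) / Γ) *
          Real.log (1 + 8 * L ^ 2 * β (T - 1) / (lam * Γ ^ 2)) := by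
  have hβT : 1 ≤ β (T - 1) := hβ0.trans (hβmono _ _ (Nat.zero_le _) le_rfl)
  set A := {t ∈ Icc 1 T | Δ t ^ 2 / β (t - 1) ≤ X t ⬝ᵥ (V (t - 1))⁻¹ *ᵥ X t}
  have hlevel : ∀ θ > 0, ∀ t ∈ {t ∈ A | θ < Δ t}, t ∈ Icc 1 T ∧
      θ ^ 2 / β (T - 1) ≤ X t ⬝ᵥ (regularizedGram lam X (Icc 1 (t - 1)))⁻¹ *ᵥ X t := by
    intro θ hθ t ht
    simp only [A, mem_filter] at ht
    obtain ⟨⟨ht, hquad⟩, hθΔ⟩ := ht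
    have ht' := mem_Icc.mp ht
    have hβt : 1 ≤ β (t - 1) := hβ0.trans (hβmono _ _ (Nat.zero_le _) (by omega))
    refine ⟨ht, le_trans ?_ (eq_regularizedGram_Icc hV0 hV (t - 1) ▸ hquad)⟩
    gcongr
    exact hβmono _ _ (by omega) le_rfl
  simp only [mul_ite, mul_one, mul_zero]
  rw [← sum_filter]
  set LOG := Real.log (1 + 8 * L ^ 2 * β (T - 1) / (lam * Γ ^ 2))
  calc ∑ t ∈ A, Δ t ≤ #A * Γ + 8 * (6 * d * β (T - 1) * LOG) / Γ := by
        refine sum_le_card_mul_add_of_card_lt_le A Δ hΓ0 hΓ1.le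
          (mul_nonneg (by positivity) (Real.log_nonneg (le_add_of_nonneg_right (by positivity))))
          (fun t ht ↦ (hΔ t (mem_filter.mp ht).1).2) fun θ hθΓ hθ1 ↦ ?_
        have hθ : 0 < θ := by linarith
        simpa only [Fintype.card_fin] using
          card_le_of_sq_div_le_dotProduct_inv_regularizedGram_Icc (X := X) hlam hβT hΓ0 hθΓ hθ1
            (fun t ht ↦ (mem_Icc.mp (hlevel θ hθ t ht).1).1)
            (fun t ht ↦ (Real.sqrt_le_iff.mp (hX t (hlevel θ hθ t ht).1)).2)
            (fun t ht ↦ (hlevel θ hθ t ht).2)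
    _ ≤ T * Γ + _ := by
        gcongr
        exact_mod_cast (card_le_card (filter_subset _ _)).trans (Nat.card_Icc 1 T).le
    _ = _ := by ring

/-- **Deterministic peeling bound.** With `V_0 = λ·I_d`, `V_t = V_{t−1} + X_t X_tᵀ`,
`‖X_t‖ ≤ L`, gaps `Δ_t ∈ [0,1]`, and a nondecreasing sequence `β_0 ≤ … ≤ β_{T−1}` with
`β_0 ≥ 1` (write `β := β_{T−1}`), for every `Γ ∈ (0,1)`:
`Σ_{t=1}^T Δ_t·1{‖X_t‖²_{V_{t−1}⁻¹} ≥ Δ_t²/β_{t−1}} ≤ T·Γ + (48dβ/Γ)·log(1 + 8L²β/(λΓ²))`. -/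
theorem peeling_bound (d T : ℕ) (hd : 1 ≤ d) (hT : 1 ≤ T) (lam L : ℝ)
    (hlam : 0 < lam) (hL : 0 < L)
    (X : ℕ → Fin d → ℝ) (hX : ∀ t ∈ Finset.Icc 1 T, enorm2 (X t) ≤ L)
    (V : ℕ → Matrix (Fin d) (Fin d) ℝ)
    (hV0 : V 0 = lam • (1 : Matrix (Fin d) (Fin d) ℝ))
    (hV : ∀ t, V (t + 1) = V t + Matrix.vecMulVec (X (t + 1)) (X (t + 1)))
    (Δ : ℕ → ℝ) (hΔ : ∀ t ∈ Finset.Icc 1 T, Δ t ∈ Set.Icc (0 : ℝ) 1)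
    (β : ℕ → ℝ) (hβ0 : 1 ≤ β 0)
    (hβmono : ∀ s t : ℕ, s ≤ t → t ≤ T - 1 → β s ≤ β t)
    (Γ : ℝ) (hΓ0 : 0 < Γ) (hΓ1 : Γ < 1) :
    ∑ t ∈ Finset.Icc 1 T,
        Δ t * (if Δ t ^ 2 / β (t - 1) ≤ X t ⬝ᵥ (V (t - 1))⁻¹.mulVec (X t) then (1 : ℝ) else 0)
      ≤ T * Γ + (48 * d * β (T - 1) / Γ) *
          Real.log (1 + 8 * L ^ 2 * β (T - 1) / (lam * Γ ^ 2)) :=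
  peeling_bound_general d T lam L hlam X hX V hV0 hV Δ hΔ β hβ0 hβmono Γ hΓ0 hΓ1
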